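/- arXiv:0704.1282 — 11 statements merged into one kernel-verified Lean document; each statement's English description precedes it below -/
import Mathlib

section
/- For every integer m and every integer n ≥ 2, |e - m/n!| > 1/(n+1)!. -/
/-!
Let `S = ∑_{i ≤ n} 1/i!`. Then `n! S` is an integer, and `n! (e - S)` is the fractional part of
`n! e`. The first omitted term gives `n! (e - S) > n!/(n+1)! = 1/(n+1)`, and the standard tail
bound gives `n! (e - S) ≤ (n+2)/(n+1)² < n/(n+1)` once `n ≥ 2`. So `n! e` lies at distance more
than `1/(n+1)` from every integer `m`; dividing by `n!` gives the claim.
-/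

open Finset Nat

theorem lt_abs_sub_intCast_of_fract_mem_Ioo {α : Type*} [Ring α] [LinearOrder α]
    [IsStrictOrderedRing α] [FloorRing α] {x δ : α} (h : Int.fract x ∈ Set.Ioo δ (1 - δ))
    (m : ℤ) : δ < |x - m| :=
  calc δ < min (Int.fract x) (1 - Int.fract x) := lt_min h.1 (lt_sub_comm.mp h.2)
    _ = |x - round x| := (abs_sub_round_eq_min x).symm
    _ ≤ |x - m| := round_le x m

theorem factorial_mul_sum_inv_factorial (n : ℕ) :
    (n ! : ℝ) * ∑ i ∈ range (n + 1), (i ! : ℝ)⁻¹ = ((∑ i ∈ range (n + 1), n ! / i ! : ℕ) : ℝ) := by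
  rw [Nat.cast_sum, mul_sum]
  refine sum_congr rfl fun i hi => ?_
  rw [Nat.cast_div (factorial_dvd_factorial (Nat.lt_succ_iff.mp (mem_range.mp hi)))
    (by positivity), div_eq_mul_inv]

theorem sum_inv_factorial_add_inv_factorial_lt_exp_one (n : ℕ) :
    ∑ i ∈ range (n + 1), (i ! : ℝ)⁻¹ + ((n + 1)! : ℝ)⁻¹ < Real.exp 1 := by
  have h := Real.sum_le_exp_of_nonneg zero_le_one (n + 3)
  simp only [one_pow, one_div, sum_range_succ _ (n + 2), sum_range_succ _ (n + 1)] at h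
  have : (0 : ℝ) < ((n + 2)! : ℝ)⁻¹ := by positivity
  linarith

theorem exp_one_sub_sum_inv_factorial_le (n : ℕ) :
    Real.exp 1 - ∑ i ∈ range (n + 1), (i ! : ℝ)⁻¹ ≤ (n + 2) / ((n + 1)! * (n + 1)) := by
  have h := (abs_sub_le_iff.1 (Real.exp_bound (x := 1) (by simp) n.succ_pos)).1
  simp only [abs_one, one_pow, one_mul, one_div] at h
  refine h.trans_eq ?_
  push_cast [Nat.succ_eq_add_one]
  ring

theorem fract_factorial_mul_exp_one_mem_Ioo {n : ℕ} (hn : 2 ≤ n) :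
    Int.fract ((n ! : ℝ) * Real.exp 1) ∈ Set.Ioo (1 / (n + 1) : ℝ) (1 - 1 / (n + 1)) := by
  have hnext := sum_inv_factorial_add_inv_factorial_lt_exp_one n
  have htail := exp_one_sub_sum_inv_factorial_le n
  set S := ∑ i ∈ range (n + 1), (i ! : ℝ)⁻¹
  have hfac : ((n + 1)! : ℝ) = (n + 1) * n ! := by push_cast [factorial_succ]; ring
  have hn' : (2 : ℝ) ≤ n := by exact_mod_cast hn
  have hsplit : (n ! : ℝ) * Real.exp 1 = n ! * (Real.exp 1 - S) + (n ! * S : ℝ) := by ring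
  have hlower : 1 / (n + 1) < (n ! : ℝ) * (Real.exp 1 - S) := by
    calc 1 / (n + 1) = (n ! : ℝ) * ((n + 1)! : ℝ)⁻¹ := by rw [hfac]; field_simp
      _ < (n ! : ℝ) * (Real.exp 1 - S) := by gcongr; linarith
  have hupper : (n ! : ℝ) * (Real.exp 1 - S) < 1 - 1 / (n + 1) := by
    calc (n ! : ℝ) * (Real.exp 1 - S) ≤ n ! * ((n + 2) / ((n + 1)! * (n + 1))) := by gcongr
      _ = (n + 2) / ((n + 1) * (n + 1)) := by rw [hfac]; field_simp
      _ < 1 - 1 / (n + 1) := by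
        rw [div_lt_iff₀ (by positivity)]; field_simp; nlinarith
  have hunit : 0 ≤ (n ! : ℝ) * (Real.exp 1 - S) ∧ (n ! : ℝ) * (Real.exp 1 - S) < 1 :=
    ⟨(lt_trans (by positivity) hlower).le, hupper.trans (sub_lt_self 1 (by positivity))⟩
  rw [hsplit, factorial_mul_sum_inv_factorial, Int.fract_add_natCast, Int.fract_eq_self.2 hunit]
  exact ⟨hlower, hupper⟩

theorem e_dist_factorial (m : ℤ) (n : ℕ) (hn : 2 ≤ n) :
    |Real.exp 1 - (m : ℝ) / (n.factorial : ℝ)| > 1 / ((n + 1).factorial : ℝ) := by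
  have hpos : (0 : ℝ) < n ! := by positivity
  have hdist := lt_abs_sub_intCast_of_fract_mem_Ioo (fract_factorial_mul_exp_one_mem_Ioo hn) m
  calc 1 / ((n + 1)! : ℝ) = 1 / (n + 1) / n ! := by push_cast [factorial_succ]; field_simp
    _ < |(n ! : ℝ) * Real.exp 1 - m| / n ! := by gcongr
    _ = |Real.exp 1 - m / n !| := by
      rw [← abs_of_pos hpos, ← abs_div, abs_of_pos hpos]; congr 1; field_simp
end

section
/- For all integers p and q with q > 1, |e - p/q| > 1/(S(q)+1)!, where S(q) is the smallest positive integer k such that q divides k!. -/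
/-- The Smarandache function: the least positive `k` with `q ∣ k!`. -/
noncomputable def S (q : ℕ) : ℕ := sInf {k : ℕ | 0 < k ∧ q ∣ k.factorial}

/-!
Put `n = S q` and `E = ∑_{i ≤ n} 1/i!`. Both `n! E` and `n! p/q` are integers, while the tail
`r = n! (e - E)` lies strictly between `1/(n+1)` and `1/n ≤ 1 - 1/(n+1)` (for `n ≥ 2`). Hence
`n! (e - p/q) = r + (integer)` is at distance more than `1/(n+1)` from `0`, which is
`|e - p/q| > 1/(n+1)!`.
-/

open Nat Finset

theorem S_pos_and_dvd_factorial {q : ℕ} (hq : q ≠ 0) : 0 < S q ∧ q ∣ (S q)! :=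
  Nat.sInf_mem (s := {k | 0 < k ∧ q ∣ k !})
    ⟨q, Nat.pos_of_ne_zero hq, dvd_factorial (Nat.pos_of_ne_zero hq) le_rfl⟩

theorem two_le_S {q : ℕ} (hq : 1 < q) : 2 ≤ S q := by
  obtain ⟨hpos, hdvd⟩ := S_pos_and_dvd_factorial (q := q) (by omega)
  by_contra! hlt
  rw [show S q = 1 by omega, factorial_one, Nat.dvd_one] at hdvd
  omega

noncomputable def expOnePartialSum (n : ℕ) : ℝ := ∑ i ∈ range (n + 1), (i ! : ℝ)⁻¹

theorem factorial_mul_expOnePartialSum (n : ℕ) :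
    (n ! : ℝ) * expOnePartialSum n = ((∑ i ∈ range (n + 1), n ! / i ! : ℕ) : ℝ) := by
  rw [expOnePartialSum, mul_sum, Nat.cast_sum]
  refine sum_congr rfl fun i hi ↦ ?_
  rw [Nat.cast_div (factorial_dvd_factorial (mem_range_succ_iff.mp hi)) (by positivity),
    div_eq_mul_inv]

theorem expOnePartialSum_lt_exp_one (n : ℕ) : expOnePartialSum n < Real.exp 1 :=
  calc expOnePartialSum n < expOnePartialSum n + ((n + 1)! : ℝ)⁻¹ := by
        simp only [lt_add_iff_pos_right, inv_pos]; positivity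
    _ ≤ Real.exp 1 := by
        simpa [expOnePartialSum, sum_range_succ _ (n + 1)] using
          Real.sum_le_exp_of_nonneg zero_le_one (n + 2)

theorem exp_one_le_expOnePartialSum_add (n : ℕ) :
    Real.exp 1 ≤ expOnePartialSum n + (n + 2) / ((n + 1)! * (n + 1)) := by
  simpa [expOnePartialSum, add_assoc, one_add_one_eq_two] using
    Real.exp_bound' zero_le_one le_rfl n.succ_pos

theorem inv_succ_lt_factorial_mul_exp_one_sub (n : ℕ) :
    ((n : ℝ) + 1)⁻¹ < n ! * (Real.exp 1 - expOnePartialSum n) := by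
  have h := expOnePartialSum_lt_exp_one (n + 1)
  rw [expOnePartialSum, sum_range_succ, ← expOnePartialSum, ← lt_sub_iff_add_lt'] at h
  calc ((n : ℝ) + 1)⁻¹ = n ! * ((n + 1)! : ℝ)⁻¹ := by
        push_cast [factorial_succ]; field_simp
    _ < _ := by gcongr

theorem factorial_mul_exp_one_sub_lt_inv {n : ℕ} (hn : 0 < n) :
    n ! * (Real.exp 1 - expOnePartialSum n) < (n : ℝ)⁻¹ := by
  have hn' : (0 : ℝ) < n := by exact_mod_cast hn
  calc n ! * (Real.exp 1 - expOnePartialSum n)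
      ≤ n ! * ((n + 2) / ((n + 1)! * (n + 1))) := by
        gcongr; linarith [exp_one_le_expOnePartialSum_add n]
    _ = (n + 2) / ((n + 1) ^ 2) := by
        push_cast [factorial_succ]; field_simp
    _ < (n : ℝ)⁻¹ := by
        rw [div_lt_iff₀ (by positivity)]; field_simp; nlinarith

theorem lt_abs_add_intCast {δ r : ℝ} (hδr : δ < r) (hr : r < 1 - δ) (k : ℤ) : δ < |r + k| := by
  rcases le_or_gt 0 k with hk | hk
  · have : (0 : ℝ) ≤ k := by exact_mod_cast hk
    exact hδr.trans_le ((le_add_of_nonneg_right this).trans (le_abs_self _))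
  · have : (k : ℝ) ≤ -1 := by exact_mod_cast Int.le_sub_one_of_lt hk
    exact lt_of_lt_of_le (by linarith) (neg_le_abs _)

theorem inv_factorial_succ_lt_abs_exp_one_sub {n : ℕ} (hn : 2 ≤ n) {x : ℝ} {m : ℤ}
    (hx : (n ! : ℝ) * x = m) : ((n + 1)! : ℝ)⁻¹ < |Real.exp 1 - x| := by
  set r := (n ! : ℝ) * (Real.exp 1 - expOnePartialSum n)
  have hn' : (2 : ℝ) ≤ n := by exact_mod_cast hn
  have hr_lt : r < 1 - ((n : ℝ) + 1)⁻¹ :=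
    calc r < (n : ℝ)⁻¹ := factorial_mul_exp_one_sub_lt_inv (by omega)
      _ ≤ 1 - ((n : ℝ) + 1)⁻¹ := by
        rw [inv_le_iff_one_le_mul₀ (by positivity)]; field_simp; nlinarith
  obtain ⟨a, ha⟩ : ∃ a : ℕ, (n ! : ℝ) * expOnePartialSum n = a :=
    ⟨_, factorial_mul_expOnePartialSum n⟩
  have hsplit : (n ! : ℝ) * (Real.exp 1 - x) = r + (a - m : ℤ) := by
    push_cast
    rw [← ha, ← hx]
    ring
  have hdist := lt_abs_add_intCast (inv_succ_lt_factorial_mul_exp_one_sub n) hr_lt (a - m)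
  rw [← hsplit, abs_mul, Nat.abs_cast] at hdist
  calc ((n + 1)! : ℝ)⁻¹ = ((n : ℝ) + 1)⁻¹ / n ! := by
        push_cast [factorial_succ]; field_simp
    _ < |Real.exp 1 - x| := by
        rwa [div_lt_iff₀ (by positivity), mul_comm]

theorem e_irrationality_measure (p : ℤ) (q : ℕ) (hq : 1 < q) :
    |Real.exp 1 - (p : ℝ) / (q : ℝ)| > 1 / ((S q + 1).factorial : ℝ) := by
  obtain ⟨-, hdvd⟩ := S_pos_and_dvd_factorial (q := q) (by omega)
  rw [gt_iff_lt, one_div]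
  refine inv_factorial_succ_lt_abs_exp_one_sub (two_le_S hq) (m := ((S q)! / q : ℕ) * p) ?_
  rw [Int.cast_mul, Int.cast_natCast, Nat.cast_div hdvd (by positivity)]
  field_simp
end

section
/- For all integers p and q with q > 1, |e - p/q| > 1/(q+1)!. -/
/-! With `S_q = ∑_{m ≤ q} 1/m!`, the tail `e - S_q` lies strictly between `1/(q+1)!` and
`q/(q+1)!` (the latter needs `q ≥ 2`). Hence `q! e` lies at distance more than `1/(q+1)` from every
integer, because `q! S_q` is an integer and the fractional part `q!(e - S_q)` lies in
`(1/(q+1), 1 - 1/(q+1))`. Since `q! · p/q = (q-1)! p` is an integer, dividing by `q!` gives the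
bound. -/

open Finset Nat

namespace Real

theorem inv_factorial_succ_lt_exp_one_sub_sum (n : ℕ) :
    1 / ((n + 1)! : ℝ) < exp 1 - ∑ m ∈ range (n + 1), 1 / (m ! : ℝ) := by
  have h := sum_le_exp_of_nonneg zero_le_one (n + 3)
  simp only [one_pow, sum_range_succ _ (n + 2), sum_range_succ _ (n + 1)] at h
  have : (0 : ℝ) < 1 / ((n + 2)! : ℝ) := by positivity
  linarith

theorem exp_one_sub_sum_le (n : ℕ) :
    exp 1 - ∑ m ∈ range (n + 1), 1 / (m ! : ℝ) ≤ (n + 2) / ((n + 1)! * (n + 1)) := by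
  have h := exp_bound' zero_le_one le_rfl (n := n + 1) n.succ_pos
  simp only [one_pow, one_mul] at h
  push_cast at h
  rw [show (n : ℝ) + 1 + 1 = n + 2 by ring] at h
  linarith

theorem factorial_mul_exp_one_sub_sum_mem {n : ℕ} (hn : 2 ≤ n) :
    1 / (n + 1 : ℝ) < n ! * (exp 1 - ∑ m ∈ range (n + 1), 1 / (m ! : ℝ)) ∧
      n ! * (exp 1 - ∑ m ∈ range (n + 1), 1 / (m ! : ℝ)) < 1 - 1 / (n + 1 : ℝ) := by
  have hfac : ((n + 1)! : ℝ) = (n + 1) * n ! := by push_cast [factorial_succ]; ring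
  have hn' : (2 : ℝ) ≤ n := by exact_mod_cast hn
  have hpos : (0 : ℝ) < n ! := by positivity
  constructor
  · have := mul_lt_mul_of_pos_left (inv_factorial_succ_lt_exp_one_sub_sum n) hpos
    rw [hfac] at this
    refine lt_of_eq_of_lt ?_ this
    field_simp
  · have := mul_le_mul_of_nonneg_left (exp_one_sub_sum_le n) hpos.le
    rw [hfac] at this
    refine this.trans_lt ?_
    field_simp
    nlinarith

end Real

theorem exists_nat_eq_factorial_mul_sum_inv_factorial (n : ℕ) :
    ∃ K : ℕ, (n ! : ℝ) * ∑ m ∈ range (n + 1), 1 / (m ! : ℝ) = K := by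
  refine ⟨∑ m ∈ range (n + 1), n ! / m !, ?_⟩
  rw [Nat.cast_sum, mul_sum]
  refine sum_congr rfl fun m hm => ?_
  rw [Nat.cast_div (factorial_dvd_factorial (mem_range_succ_iff.mp hm)) (by positivity)]
  ring

theorem lt_abs_add_intCast_s6 {a x : ℝ} (N : ℤ) (hax : a < x) (hxa : x < 1 - a) :
    a < |x + N| := by
  rcases lt_trichotomy N 0 with hN | rfl | hN
  · have : (N : ℝ) ≤ -1 := by exact_mod_cast Int.le_sub_one_of_lt hN
    exact (by linarith : a < -(x + N)).trans_le (neg_le_abs _)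
  · simpa using hax.trans_le (le_abs_self x)
  · have : (1 : ℝ) ≤ N := by exact_mod_cast hN
    exact (by linarith : a < x + N).trans_le (le_abs_self _)

theorem e_weak_measure (p : ℤ) (q : ℕ) (hq : 1 < q) :
    |Real.exp 1 - (p : ℝ) / (q : ℝ)| > 1 / ((q + 1).factorial : ℝ) := by
  obtain ⟨K, hK⟩ := exists_nat_eq_factorial_mul_sum_inv_factorial q
  obtain ⟨hlo, hhi⟩ := Real.factorial_mul_exp_one_sub_sum_mem hq
  have hfac : (q ! : ℝ) = q * (q - 1)! := by exact_mod_cast (mul_factorial_pred (by omega)).symm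
  have hpos : (0 : ℝ) < q ! := by positivity
  have hscaled : (q ! : ℝ) * (Real.exp 1 - p / q) =
      q ! * (Real.exp 1 - ∑ m ∈ range (q + 1), 1 / (m ! : ℝ)) + ((K - (q - 1)! * p : ℤ) : ℝ) := by
    push_cast
    rw [← hK, hfac]
    field_simp
    ring
  have key := lt_abs_add_intCast_s6 (K - (q - 1)! * p) hlo hhi
  rw [← hscaled, abs_mul, abs_of_pos hpos] at key
  rw [gt_iff_lt, factorial_succ, Nat.cast_mul, ← div_div, div_lt_iff₀ hpos]
  push_cast
  linarith
end

section
/- If n is a prime number and q = n! > 1, then for all integers p, |e - p/q| > 1/(P(q)+1)!, where P(q) is the largest prime factor of q. -/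
/-!
Let `s = ∑_{i ≤ n} 1/i!`, so that `n! s` is an integer. The tail `e - s` lies strictly between
`1/(n+1)!` and `1/n! - 1/(n+1)!` once `n ≥ 2`, so `e` stays at distance more than `1/(n+1)!`
from every point of `(1/n!) ℤ`. For prime `n` the largest prime factor of `n!` is `n` itself.
-/

/-- The largest prime factor of `q`. -/
noncomputable def P (q : ℕ) : ℕ := sSup {p : ℕ | p.Prime ∧ p ∣ q}

open Finset Real
open scoped Nat

lemma P_factorial {n : ℕ} (hn : n.Prime) : P n ! = n := by
  have hset : {p : ℕ | p.Prime ∧ p ∣ n !} = {p : ℕ | p.Prime ∧ p ≤ n} := by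
    ext p
    exact and_congr_right fun hp => hp.dvd_factorial
  rw [P, hset]
  exact le_antisymm (csSup_le ⟨n, hn, le_rfl⟩ fun p hp => hp.2)
    (le_csSup ⟨n, fun p hp => hp.2⟩ ⟨hn, le_rfl⟩)

lemma lt_abs_sub_intCast_div {x δ d : ℝ} (hd : 0 < d) {m : ℤ} (hlo : δ < x - m / d)
    (hhi : x - m / d < 1 / d - δ) (p : ℤ) : δ < |x - p / d| := by
  rcases le_or_gt p m with hpm | hmp
  · have : (p : ℝ) / d ≤ m / d := div_le_div_of_nonneg_right (by exact_mod_cast hpm) hd.le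
    exact lt_abs.2 (Or.inl (by linarith))
  · have : (m : ℝ) / d + 1 / d ≤ p / d := by
      rw [← add_div]
      exact div_le_div_of_nonneg_right (by exact_mod_cast hmp) hd.le
    exact lt_abs.2 (Or.inr (by linarith))

lemma exists_sum_one_div_factorial_eq_intCast_div (n : ℕ) :
    ∃ m : ℤ, ∑ i ∈ range (n + 1), 1 / (i ! : ℝ) = m / n ! := by
  refine ⟨∑ i ∈ range (n + 1), ((n ! / i ! : ℕ) : ℤ), ?_⟩
  rw [eq_div_iff (by positivity), sum_mul, Int.cast_sum]
  refine sum_congr rfl fun i hi => ?_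
  rw [Int.cast_natCast, Nat.cast_div (Nat.factorial_dvd_factorial (mem_range_succ_iff.1 hi))
    (by positivity)]
  ring

lemma one_div_factorial_succ_lt_exp_one_sub_sum (n : ℕ) :
    1 / ((n + 1)! : ℝ) < exp 1 - ∑ i ∈ range (n + 1), 1 / (i ! : ℝ) := by
  have h := sum_le_exp_of_nonneg zero_le_one (n + 3)
  simp only [one_pow] at h
  rw [sum_range_succ, sum_range_succ] at h
  have : (0 : ℝ) < 1 / (n + 2)! := by positivity
  linarith

lemma exp_one_sub_sum_lt {n : ℕ} (hn : 2 ≤ n) :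
    exp 1 - ∑ i ∈ range (n + 1), 1 / (i ! : ℝ) < 1 / (n ! : ℝ) - 1 / (n + 1)! := by
  have h := exp_bound' zero_le_one le_rfl n.succ_pos
  simp only [one_pow, one_mul, Nat.succ_eq_add_one] at h
  have hn' : (2 : ℝ) ≤ n := by exact_mod_cast hn
  -- the tail bound `(n+2)/((n+1)!(n+1))` is below `n/(n+1)!` because `n² > 2`
  have htail : ((n + 1 : ℕ) + 1 : ℝ) / ((n + 1)! * (n + 1 : ℕ)) <
      1 / (n ! : ℝ) - 1 / (n + 1)! := by
    rw [div_lt_iff₀ (by positivity), Nat.factorial_succ]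
    push_cast
    field_simp
    nlinarith
  linarith

theorem one_div_factorial_succ_lt_abs_exp_one_sub_div {n : ℕ} (hn : 2 ≤ n) (p : ℤ) :
    1 / ((n + 1)! : ℝ) < |exp 1 - p / n !| := by
  obtain ⟨m, hm⟩ := exists_sum_one_div_factorial_eq_intCast_div n
  have hlo := one_div_factorial_succ_lt_exp_one_sub_sum n
  have hhi := exp_one_sub_sum_lt hn
  rw [hm] at hlo hhi
  exact lt_abs_sub_intCast_div (by positivity) hlo hhi p

theorem e_measure_prime_factorial_general (n : ℕ) (hn : n.Prime) (q : ℕ) (hq : q = n.factorial)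
    (p : ℤ) :
    |Real.exp 1 - (p : ℝ) / (q : ℝ)| > 1 / ((P q + 1).factorial : ℝ) := by
  subst hq
  rw [P_factorial hn]
  exact one_div_factorial_succ_lt_abs_exp_one_sub_div hn.two_le p

theorem e_measure_prime_factorial (n : ℕ) (hn : n.Prime) (q : ℕ) (hq : q = n.factorial)
    (hq1 : 1 < q) (p : ℤ) :
    |Real.exp 1 - (p : ℝ) / (q : ℝ)| > 1 / ((P q + 1).factorial : ℝ) :=
  e_measure_prime_factorial_general n hn q hq p
end

section
/- If n ≥ 4 is composite, then there exists an integer p such that |e - p/n!| ≤ 1/(P(n!)+1)!, where P(q) is the largest prime factor of q. -/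
/-!
Every composite `n` satisfies `P(n!) < n`, since the primes dividing `n!` are those `≤ n` and `n`
itself is not one of them. Hence `(P(n!) + 1)! ≤ n!`, and it suffices to approximate `e` by the
nearest fraction with denominator `n!`, which is within `1 / (2 n!)`.
-/

open Nat

theorem exists_int_abs_sub_div_le (x : ℝ) {m : ℝ} (hm : 0 < m) :
    ∃ p : ℤ, |x - p / m| ≤ 1 / (2 * m) := by
  refine ⟨round (x * m), ?_⟩
  calc |x - round (x * m) / m| = |x * m - round (x * m)| / m := by
        rw [← abs_of_pos hm, ← abs_div, abs_of_pos hm, sub_div, mul_div_cancel_right₀ _ hm.ne']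
    _ ≤ (1 / 2) / m := by gcongr; exact abs_sub_round _
    _ = 1 / (2 * m) := by rw [div_div]

theorem P_factorial_le_sub_one {n : ℕ} (hn : ¬ n.Prime) : P n ! ≤ n - 1 := by
  refine csSup_le' fun p ⟨hp, hdvd⟩ => ?_
  have hle : p ≤ n := hp.dvd_factorial.mp hdvd
  have hne : p ≠ n := fun h => hn (h ▸ hp)
  omega

theorem factorial_P_factorial_add_one_le {n : ℕ} (hn : ¬ n.Prime) : (P n ! + 1)! ≤ n ! :=
  calc (P n ! + 1)! ≤ (n - 1 + 1)! := factorial_le (by have := P_factorial_le_sub_one hn; omega)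
    _ = n ! := by cases n <;> rfl

theorem e_measure_fails_composite_general (n : ℕ) (hcomp : ¬ n.Prime) :
    ∃ p : ℤ, |Real.exp 1 - (p : ℝ) / (n.factorial : ℝ)|
      ≤ 1 / ((P n.factorial + 1).factorial : ℝ) := by
  obtain ⟨p, hp⟩ := exists_int_abs_sub_div_le (Real.exp 1) (m := n !) (by positivity)
  refine ⟨p, hp.trans ?_⟩
  have hfac : ((P n ! + 1)! : ℝ) ≤ n ! := by exact_mod_cast factorial_P_factorial_add_one_le hcomp
  calc 1 / (2 * (n ! : ℝ)) ≤ 1 / n ! := by gcongr; linarith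
    _ ≤ 1 / (P n ! + 1)! := by gcongr

theorem e_measure_fails_composite (n : ℕ) (hn : 4 ≤ n) (hcomp : ¬ n.Prime) :
    ∃ p : ℤ, |Real.exp 1 - (p : ℝ) / (n.factorial : ℝ)|
      ≤ 1 / ((P n.factorial + 1).factorial : ℝ) :=
  e_measure_fails_composite_general n hcomp
end

section
/- The intersection over all n ≥ 1 of the nested intervals I_n defined by I_1 = [2,3] and I_n = [left(I_{n-1}) + len(I_{n-1})/n, left(I_{n-1}) + 2·len(I_{n-1})/n] for n ≥ 2 (i.e., I_n is the second of n equal subintervals of I_{n-1}) equals {e}. -/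
/-- The nested intervals, given by their pair of endpoints: `I 1 = [2,3]`, and
`I n` is the second of `n` equal subintervals of `I (n-1)`. -/
noncomputable def I : ℕ → ℝ × ℝ
  | 0 => (2, 3)
  | 1 => (2, 3)
  | (n + 2) => ((I (n + 1)).1 + ((I (n + 1)).2 - (I (n + 1)).1) / (n + 2),
                (I (n + 1)).1 + 2 * ((I (n + 1)).2 - (I (n + 1)).1) / (n + 2))

/-! The left endpoint of `I (n + 1)` is the partial sum `∑_{k ≤ n + 1} 1 / k!` of the series of
`e` and its length is `1 / (n + 1)!`. The Taylor remainder bound for `exp` on `[0, 1]` puts `e`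
in every `I n`, and since the lengths tend to `0`, nothing else lies in all of them. -/

open Filter Finset Nat Set Topology

theorem Set.iInter_Icc_eq_singleton {a b : ℕ → ℝ} {y : ℝ} (hy : ∀ n, y ∈ Icc (a n) (b n))
    (hlen : Tendsto (fun n ↦ b n - a n) atTop (𝓝 0)) : ⋂ n, Icc (a n) (b n) = {y} := by
  refine subset_antisymm (fun x hx ↦ ?_) (singleton_subset_iff.2 (mem_iInter.2 hy))
  have hdist : ∀ n, dist x y ≤ b n - a n := fun n ↦
    Real.dist_le_of_mem_Icc (mem_iInter.1 hx n) (hy n)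
  exact dist_le_zero.1 (ge_of_tendsto' hlen hdist)

theorem I_succ (n : ℕ) :
    I (n + 1) = (∑ k ∈ range (n + 2), ((k ! : ℕ) : ℝ)⁻¹,
      ∑ k ∈ range (n + 2), ((k ! : ℕ) : ℝ)⁻¹ + (((n + 1)! : ℕ) : ℝ)⁻¹) := by
  induction n with
  | zero => norm_num [I, sum_range_succ]
  | succ n ih =>
    rw [I, ih]
    have hfac : (((n + 2)! : ℕ) : ℝ) = (n + 2) * (((n + 1)! : ℕ) : ℝ) := by
      push_cast [Nat.factorial_succ (n + 1)]; ring
    simp only [sum_range_succ _ (n + 2), add_sub_cancel_left, hfac]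
    ext
    · field_simp
    · field_simp; ring

theorem Real.exp_one_mem_Icc_sum_inv_factorial (n : ℕ) :
    Real.exp 1 ∈ Icc (∑ k ∈ range (n + 2), ((k ! : ℕ) : ℝ)⁻¹)
      (∑ k ∈ range (n + 2), ((k ! : ℕ) : ℝ)⁻¹ + (((n + 1)! : ℕ) : ℝ)⁻¹) := by
  have hbound := Real.exp_bound' zero_le_one le_rfl (n := n + 2) (by omega)
  simp only [one_pow, one_div] at hbound
  refine ⟨by simpa using Real.sum_le_exp_of_nonneg zero_le_one (n + 2), hbound.trans ?_⟩
  gcongr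
  rw [Nat.factorial_succ (n + 1)]
  push_cast
  rw [div_le_iff₀ (by positivity)]
  field_simp
  nlinarith

theorem iInter_eq_e :
    (⋂ n ∈ {n : ℕ | 1 ≤ n}, Set.Icc (I n).1 (I n).2) = {Real.exp 1} := by
  have hreindex : (⋂ n ∈ {n : ℕ | 1 ≤ n}, Icc (I n).1 (I n).2) =
      ⋂ n, Icc (I (n + 1)).1 (I (n + 1)).2 := by
    ext x
    simp only [mem_iInter, mem_ofPred_eq]
    exact ⟨fun h n ↦ h (n + 1) n.succ_pos, fun h n hn ↦ Nat.succ_pred_eq_of_pos hn ▸ h (n - 1)⟩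
  rw [hreindex]
  refine iInter_Icc_eq_singleton (fun n ↦ ?_) ?_
  · simpa only [I_succ] using Real.exp_one_mem_Icc_sum_inv_factorial n
  · simp only [I_succ, add_sub_cancel_left]
    exact tendsto_inv_atTop_zero.comp <| tendsto_natCast_atTop_atTop.comp <|
      factorial_tendsto_atTop.comp (tendsto_add_atTop_nat 1)
end

section
/- For every n ≥ 1, the interval I_n in the nested construction equals [a_n/n!, (a_n+1)/n!] where a_n = n!·∑_{k=0}^{n} 1/k!, i.e., its left endpoint is the n-th partial sum of the series for e and its length is 1/n!. -/
open Finset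

lemma I_fst_succ_succ (n : ℕ) :
    (I (n + 2)).1 = (I (n + 1)).1 + ((I (n + 1)).2 - (I (n + 1)).1) / (n + 2) := rfl

lemma I_snd_sub_fst_succ_succ (n : ℕ) :
    (I (n + 2)).2 - (I (n + 2)).1 = ((I (n + 1)).2 - (I (n + 1)).1) / (n + 2) := by
  simp only [I]
  ring

lemma I_snd_sub_fst (n : ℕ) : (I (n + 1)).2 - (I (n + 1)).1 = 1 / ((n + 1).factorial : ℝ) := by
  induction n with
  | zero => norm_num [I]
  | succ n ih =>
    rw [I_snd_sub_fst_succ_succ, ih, Nat.factorial_succ (n + 1), div_div]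
    push_cast
    ring

lemma I_fst_eq_sum (n : ℕ) :
    (I (n + 1)).1 = ∑ k ∈ range (n + 2), (1 : ℝ) / (k.factorial : ℝ) := by
  induction n with
  | zero => norm_num [I, sum_range_succ]
  | succ n ih =>
    rw [I_fst_succ_succ, I_snd_sub_fst, ih, sum_range_succ _ (n + 2), Nat.factorial_succ (n + 1)]
    push_cast
    field_simp
    ring

theorem I_endpoints (n : ℕ) (hn : 1 ≤ n) :
    (I n).1 = ∑ k ∈ Finset.range (n + 1), (1 : ℝ) / (k.factorial : ℝ) ∧
    (I n).2 = (∑ k ∈ Finset.range (n + 1), (1 : ℝ) / (k.factorial : ℝ)) +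
      1 / (n.factorial : ℝ) := by
  obtain ⟨m, rfl⟩ := Nat.exists_eq_add_of_le' hn
  have hlength := I_snd_sub_fst m
  rw [← I_fst_eq_sum m]
  exact ⟨rfl, by linarith⟩
end

section
/- The number cosh(1) = ∑_{n≥0} 1/(2n)! is irrational. -/
/-!
Multiplying `cosh 1 = ∑ 1/(2n)!` by `(2k)!` splits it into the integer `∑_{n ≤ k} (2k)!/(2n)!` and
a tail dominated by the geometric series `∑_{n ≥ 1} (2k+1)^{-2n}`, which lies strictly between
`0` and `1`. If `cosh 1` had denominator `k`, the multiple `(2k)! cosh 1` would be an integer.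
-/

open Finset Nat Real

theorem irrational_of_forall_dvd_mul_mem_Ioo {x : ℝ}
    (h : ∀ d : ℕ, 0 < d → ∃ m : ℕ, d ∣ m ∧ ∃ z : ℤ, (m : ℝ) * x ∈ Set.Ioo (z : ℝ) (z + 1)) :
    Irrational x := by
  rintro ⟨q, rfl⟩
  obtain ⟨_, ⟨c, rfl⟩, z, hz_lt, hlt_z⟩ := h q.den q.pos
  have hq : (q.den : ℝ) * q = q.num := mod_cast Rat.den_mul_eq_num q
  have hnum : ((q.den * c : ℕ) : ℝ) * q = ((c * q.num : ℤ) : ℝ) := by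
    push_cast
    linear_combination (c : ℝ) * hq
  rw [hnum] at hz_lt hlt_z
  have h₁ : z < c * q.num := mod_cast hz_lt
  have h₂ : c * q.num < z + 1 := mod_cast hlt_z
  omega

theorem tsum_pow_succ_lt_one {r : ℝ} (h₀ : 0 ≤ r) (h₁ : r < 1 / 2) :
    ∑' n : ℕ, r ^ (n + 1) < 1 := by
  have h : ∑' n : ℕ, r ^ (n + 1) = r * (1 - r)⁻¹ := by
    rw [← tsum_geometric_of_lt_one h₀ (by linarith), ← tsum_mul_left]
    exact tsum_congr fun n => pow_succ' r n
  rw [h, ← div_eq_mul_inv, div_lt_one (by linarith)]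
  linarith

theorem factorial_mul_inv_factorial_add_le (m n : ℕ) :
    (m ! : ℝ) * ((m + n)! : ℝ)⁻¹ ≤ ((m + 1 : ℝ) ^ n)⁻¹ := by
  have h : ((m ! * (m + 1) ^ n : ℕ) : ℝ) ≤ (m + n)! := mod_cast factorial_mul_pow_le_factorial
  push_cast at h
  rw [← div_eq_mul_inv, div_le_iff₀ (by positivity), ← div_eq_inv_mul, le_div_iff₀ (by positivity)]
  exact h

theorem factorial_mul_inv_factorial_two_mul_le (k n : ℕ) :
    ((2 * k)! : ℝ) * ((2 * (n + (k + 1)))! : ℝ)⁻¹ ≤ ((2 * k + 1 : ℝ) ^ 2)⁻¹ ^ (n + 1) := by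
  have h := factorial_mul_inv_factorial_add_le (2 * k) (2 * (n + 1))
  rw [show 2 * k + 2 * (n + 1) = 2 * (n + (k + 1)) by ring] at h
  rw [inv_pow, ← pow_mul]
  exact_mod_cast h

theorem hasSum_inv_factorial_two_mul_cosh_one :
    HasSum (fun n : ℕ => ((2 * n)! : ℝ)⁻¹) (cosh 1) := by
  simpa using hasSum_cosh 1

theorem factorial_mul_cosh_one_eq (k : ℕ) :
    ((2 * k)! : ℝ) * cosh 1 = ((∑ n ∈ range (k + 1), (2 * k)! / (2 * n)! : ℕ) : ℝ) +
      (2 * k)! * ∑' n : ℕ, ((2 * (n + (k + 1)))! : ℝ)⁻¹ := by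
  have hs := hasSum_inv_factorial_two_mul_cosh_one
  have hhead : ((∑ n ∈ range (k + 1), (2 * k)! / (2 * n)! : ℕ) : ℝ) =
      (2 * k)! * ∑ n ∈ range (k + 1), ((2 * n)! : ℝ)⁻¹ := by
    rw [Nat.cast_sum, mul_sum]
    refine sum_congr rfl fun n hn => ?_
    have hdvd : (2 * n)! ∣ (2 * k)! :=
      factorial_dvd_factorial (by linarith [mem_range.mp hn])
    rw [Nat.cast_div hdvd (by positivity), div_eq_mul_inv]
  rw [hhead, ← mul_add, hs.summable.sum_add_tsum_nat_add, hs.tsum_eq]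

theorem factorial_mul_tsum_inv_factorial_two_mul_mem_Ioo {k : ℕ} (hk : 1 ≤ k) :
    ((2 * k)! : ℝ) * ∑' n : ℕ, ((2 * (n + (k + 1)))! : ℝ)⁻¹ ∈ Set.Ioo 0 1 := by
  have htail : Summable fun n : ℕ => ((2 * (n + (k + 1)))! : ℝ)⁻¹ :=
    (summable_nat_add_iff (k + 1)).mpr hasSum_inv_factorial_two_mul_cosh_one.summable
  set r : ℝ := ((2 * k + 1 : ℝ) ^ 2)⁻¹
  have hr : r < 1 / 2 := by
    have : (9 : ℝ) ≤ (2 * k + 1) ^ 2 := by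
      have : (1 : ℝ) ≤ k := mod_cast hk
      nlinarith
    exact (inv_anti₀ (by norm_num) this).trans_lt (by norm_num)
  have hgeom : Summable fun n : ℕ => r ^ (n + 1) :=
    (summable_nat_add_iff 1).mpr (summable_geometric_of_lt_one (by positivity) (by linarith))
  refine ⟨mul_pos (by positivity) (htail.tsum_pos (fun _ => by positivity) 0 (by positivity)), ?_⟩
  calc ((2 * k)! : ℝ) * ∑' n : ℕ, ((2 * (n + (k + 1)))! : ℝ)⁻¹
      = ∑' n : ℕ, ((2 * k)! : ℝ) * ((2 * (n + (k + 1)))! : ℝ)⁻¹ := tsum_mul_left.symm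
    _ ≤ ∑' n : ℕ, r ^ (n + 1) :=
      (htail.mul_left _).tsum_le_tsum (factorial_mul_inv_factorial_two_mul_le k) hgeom
    _ < 1 := tsum_pow_succ_lt_one (by positivity) hr

theorem cosh_one_irrational : Irrational (Real.cosh 1) := by
  refine irrational_of_forall_dvd_mul_mem_Ioo fun k hk => ⟨(2 * k)!, dvd_factorial hk (by omega),
    (∑ n ∈ range (k + 1), (2 * k)! / (2 * n)! : ℕ), ?_⟩
  obtain ⟨hpos, hlt⟩ := factorial_mul_tsum_inv_factorial_two_mul_mem_Ioo hk
  rw [factorial_mul_cosh_one_eq, Int.cast_natCast]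
  constructor <;> linarith
end

section
/- The number sinh(1) = ∑_{n≥0} 1/(2n+1)! is irrational. -/
/-!
Let `x = ∑ 1 / (a n)!` with `a` strictly increasing; `sinh 1` is the case `a n = 2n + 1`.
If `x` had denominator `d`, take `N = d + 1`. Multiplying by `(a N)!` turns `x` into an integer,
and it turns the first `N + 1` terms of the series into an integer too. The remaining tail is then
positive and, comparing with a geometric series of ratio `1 / (a N + 1)`, at most `1 / a N < 1`,
so it cannot be an integer.
-/

open Nat Finset

theorem irrational_of_forall_dvd_mul_ne_intCast {x : ℝ}
    (h : ∀ d : ℕ, 0 < d → ∃ M : ℕ, d ∣ M ∧ ∀ z : ℤ, (M : ℝ) * x ≠ z) :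
    Irrational x := by
  rintro ⟨q, rfl⟩
  obtain ⟨M, ⟨c, rfl⟩, hM⟩ := h q.den q.den_pos
  apply hM (c * q.num)
  have hq : (q : ℝ) * q.den = q.num := by exact_mod_cast Rat.mul_den_eq_num q
  push_cast
  linear_combination (c : ℝ) * hq

theorem factorial_div_factorial_add_le (m k : ℕ) :
    (m ! : ℝ) / (m + k)! ≤ ((m + 1 : ℝ)⁻¹) ^ k := by
  rw [div_le_iff₀ (by positivity), inv_pow, ← div_eq_inv_mul, le_div_iff₀ (by positivity)]
  exact_mod_cast factorial_mul_pow_le_factorial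

theorem exists_natCast_eq_factorial_mul_sum_range {a : ℕ → ℕ} (ha : Monotone a) (N : ℕ) :
    ∃ A : ℕ, ((a N)! : ℝ) * ∑ i ∈ range (N + 1), 1 / ((a i)! : ℝ) = A := by
  refine ⟨∑ i ∈ range (N + 1), (a N)! / (a i)!, ?_⟩
  rw [mul_sum, cast_sum]
  refine sum_congr rfl fun i hi => ?_
  have hdvd : (a i)! ∣ (a N)! :=
    factorial_dvd_factorial (ha (Nat.lt_succ_iff.mp (mem_range.mp hi)))
  rw [Nat.cast_div hdvd (by positivity), mul_one_div]

theorem factorial_mul_tail_le {a : ℕ → ℕ} (ha : StrictMono a) {N : ℕ} (hN : 0 < a N)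
    {t : ℝ}
    (ht : HasSum (fun k => 1 / ((a (k + (N + 1)))! : ℝ)) t) :
    ((a N)! : ℝ) * t ≤ 1 / a N := by
  set r : ℝ := (a N + 1 : ℝ)⁻¹
  have hr₀ : 0 ≤ r := by positivity
  have hr₁ : r < 1 := inv_lt_one_of_one_lt₀ (by norm_cast; omega)
  have hgeom : HasSum (fun k => r * r ^ k) (1 / a N) := by
    have hsum : r * (1 - r)⁻¹ = 1 / a N := by
      have : (a N : ℝ) ≠ 0 := by positivity
      simp only [r]
      field_simp
      rw [add_sub_cancel_right, div_self this]
    simpa only [hsum] using (hasSum_geometric_of_lt_one hr₀ hr₁).mul_left r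
  refine hasSum_le (fun k => ?_) (ht.mul_left _) hgeom
  obtain ⟨j, hj⟩ : ∃ j, a (k + (N + 1)) = a N + j :=
    Nat.exists_eq_add_of_le (ha.monotone (by omega))
  have hkj : k + 1 ≤ j := by
    have := ha.add_le_nat (k + 1) N
    rw [show k + 1 + N = k + (N + 1) by omega] at this
    omega
  calc ((a N)! : ℝ) * (1 / (a (k + (N + 1)))!) = (a N)! / (a N + j)! := by rw [hj, mul_one_div]
    _ ≤ r ^ j := factorial_div_factorial_add_le _ _
    _ ≤ r ^ (k + 1) := pow_le_pow_of_le_one hr₀ hr₁.le hkj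
    _ = r * r ^ k := by ring

theorem irrational_of_hasSum_one_div_factorial {a : ℕ → ℕ} (ha : StrictMono a) {x : ℝ}
    (hx : HasSum (fun n => 1 / ((a n)! : ℝ)) x) : Irrational x := by
  refine irrational_of_forall_dvd_mul_ne_intCast fun d hd => ?_
  have hdN : d + 1 ≤ a (d + 1) := ha.le_apply
  refine ⟨(a (d + 1))!, dvd_factorial hd (by omega), fun z hz => ?_⟩
  set N := d + 1
  set t := x - ∑ i ∈ range (N + 1), 1 / ((a i)! : ℝ) with ht_def
  have ht : HasSum (fun k => 1 / ((a (k + (N + 1)))! : ℝ)) t :=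
    (hasSum_nat_add_iff' (N + 1)).mpr hx
  have ht_pos : 0 < ((a N)! : ℝ) * t := by
    have hterm : 0 < 1 / ((a (0 + (N + 1)))! : ℝ) := by positivity
    exact mul_pos (by positivity) (hterm.trans_le (le_hasSum ht 0 fun _ _ => by positivity))
  have ht_lt : ((a N)! : ℝ) * t < 1 := by
    refine (factorial_mul_tail_le ha (by omega) ht).trans_lt ?_
    have hN : (1 : ℝ) < a N := by exact_mod_cast (by omega : 1 < a N)
    exact (div_lt_one (by linarith)).mpr hN
  obtain ⟨A, hA⟩ := exists_natCast_eq_factorial_mul_sum_range ha.monotone N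
  have hsplit : ((a N)! : ℝ) * t = z - A := by rw [ht_def, mul_sub, hz, hA]
  rw [hsplit] at ht_pos ht_lt
  have h₁ : (A : ℤ) < z := by exact_mod_cast sub_pos.mp ht_pos
  have h₂ : z < A + 1 := by exact_mod_cast sub_lt_iff_lt_add'.mp ht_lt
  omega

theorem sinh_one_irrational : Irrational (Real.sinh 1) :=
  irrational_of_hasSum_one_div_factorial (a := fun n => 2 * n + 1)
    (fun m n h => by dsimp only; omega) (by simpa using Real.hasSum_sinh 1)
end

section
/- Let (b_n)_{n≥1} be integers with b_n ≥ 2, and (a_n)_{n≥0} integers with 0 ≤ a_n ≤ b_n - 1 for n ≥ 1. If every prime divides infinitely many of the b_n, and both a_n > 0 infinitely often and a_n < b_n - 1 infinitely often, then the sum a_0 + ∑_{n≥1} a_n/(b_1·b_2···b_n) is irrational. -/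
/-!
If `x = p / q`, choose `N` with `q ∣ b₁ ⋯ b_N`; this is possible because every prime divides
infinitely many `b_n`. Then `b₁ ⋯ b_N · x` is an integer plus the tail
`∑_{k ≥ 1} a_{N+k} / (b_{N+1} ⋯ b_{N+k})`, itself a Cantor series. Its digits are neither
eventually `0` nor eventually maximal, so it lies strictly between `0` and `1`: a contradiction.
-/

open Finset

theorem Finset.prod_Icc_one_succ {M : Type*} [CommMonoid M] (f : ℕ → M) (n : ℕ) :
    ∏ i ∈ Icc 1 (n + 1), f i = f 1 * ∏ i ∈ Icc 1 n, f (i + 1) := by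
  induction n with
  | zero => simp
  | succ n ih => rw [prod_Icc_succ_top (by omega), ih, prod_Icc_succ_top (by omega), mul_assoc]

theorem Set.Infinite.exists_add_one_add {P : ℕ → Prop} (h : {n | P n}.Infinite) (N : ℕ) :
    ∃ k, P (k + 1 + N) := by
  obtain ⟨n, hn, hNn⟩ := h.exists_gt N
  exact ⟨n - N - 1, by rwa [show n - N - 1 + 1 + N = n by omega]⟩

theorem irrational_of_forall_exists_dvd {x : ℝ}
    (h : ∀ m : ℕ, 0 < m → ∃ B : ℤ, (m : ℤ) ∣ B ∧ ∃ z : ℤ, z < B * x ∧ B * x < z + 1) :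
    Irrational x := by
  rintro ⟨q, rfl⟩
  obtain ⟨B, ⟨e, rfl⟩, z, hz, hz1⟩ := h q.den q.den_pos
  have hBq : ((q.den * e : ℤ) : ℝ) * q = (e * q.num : ℤ) := by
    rw [Rat.cast_def]
    push_cast
    field_simp
  rw [hBq] at hz hz1
  have : z < e * q.num := by exact_mod_cast hz
  have : e * q.num < z + 1 := by exact_mod_cast hz1
  omega

theorem exists_dvd_prod_Ioc {b : ℕ → ℤ}
    (hprime : ∀ p : ℕ, p.Prime → {n | (p : ℤ) ∣ b n}.Infinite) {m : ℕ} (hm : m ≠ 0) (M : ℕ) :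
    ∃ N ≥ M, (m : ℤ) ∣ ∏ i ∈ Ioc M N, b i := by
  induction m using Nat.recOnMul generalizing M with
  | zero => exact absurd rfl hm
  | one => exact ⟨M, le_rfl, by simp⟩
  | prime p hp =>
    obtain ⟨n, hn, hMn⟩ := (hprime p hp).exists_gt M
    exact ⟨n, hMn.le, hn.trans (dvd_prod_of_mem _ (mem_Ioc.mpr ⟨hMn, le_rfl⟩))⟩
  | mul k l ihk ihl =>
    obtain ⟨N₁, hMN₁, hk⟩ := ihk (left_ne_zero_of_mul hm) M
    obtain ⟨N₂, hN₁N₂, hl⟩ := ihl (right_ne_zero_of_mul hm) N₁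
    refine ⟨N₂, hMN₁.trans hN₁N₂, ?_⟩
    rw [← prod_Ioc_consecutive _ hMN₁ hN₁N₂, Nat.cast_mul]
    exact mul_dvd_mul hk hl

def IsCantorDigits (a b : ℕ → ℤ) : Prop :=
  ∀ n, 1 ≤ n → 0 ≤ a n ∧ a n ≤ b n - 1

noncomputable def cantorTerm (a b : ℕ → ℤ) (n : ℕ) : ℝ :=
  (a (n + 1) : ℝ) / ∏ i ∈ Icc 1 (n + 1), (b i : ℝ)

noncomputable def cantorSeries (a b : ℕ → ℤ) : ℝ :=
  ∑' n, cantorTerm a b n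

variable {a b : ℕ → ℤ}

namespace IsCantorDigits

theorem shift (ha : IsCantorDigits a b) (N : ℕ) :
    IsCantorDigits (fun n => a (n + N)) (fun n => b (n + N)) :=
  fun n hn => ha (n + N) (by omega)

theorem one_le (ha : IsCantorDigits a b) {n : ℕ} (hn : 1 ≤ n) : (1 : ℝ) ≤ b n := by
  have := ha n hn
  exact_mod_cast (show 1 ≤ b n by omega)

theorem prod_pos (ha : IsCantorDigits a b) (n : ℕ) : 0 < ∏ i ∈ Icc 1 n, (b i : ℝ) :=
  Finset.prod_pos fun _ hi => one_pos.trans_le (ha.one_le (mem_Icc.mp hi).1)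

end IsCantorDigits

theorem cantorTerm_nonneg (ha : IsCantorDigits a b) (n : ℕ) :
    0 ≤ cantorTerm a b n :=
  div_nonneg (by exact_mod_cast (ha (n + 1) n.succ_pos).1) (ha.prod_pos _).le

theorem cantorTerm_le (ha : IsCantorDigits a b) (n : ℕ) :
    cantorTerm a b n ≤ cantorTerm (b - 1) b n := by
  unfold cantorTerm
  gcongr
  · exact (ha.prod_pos _).le
  · simpa using (ha (n + 1) n.succ_pos).2

theorem cantorTerm_lt (ha : IsCantorDigits a b) {n : ℕ}
    (hn : a (n + 1) < b (n + 1) - 1) : cantorTerm a b n < cantorTerm (b - 1) b n := by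
  unfold cantorTerm
  gcongr
  · exact ha.prod_pos _
  · simpa using hn

theorem cantorTerm_sub_one_eq (ha : IsCantorDigits a b) (n : ℕ) :
    cantorTerm (b - 1) b n =
      1 / ∏ i ∈ Icc 1 n, (b i : ℝ) - 1 / ∏ i ∈ Icc 1 (n + 1), (b i : ℝ) := by
  have hP := (ha.prod_pos n).ne'
  have hb := (one_pos.trans_le (ha.one_le n.succ_pos)).ne'
  simp only [cantorTerm, Pi.sub_apply, Pi.one_apply, Int.cast_sub, Int.cast_one]
  rw [prod_Icc_succ_top (by omega)]
  field_simp

theorem sum_range_cantorTerm_sub_one_le (ha : IsCantorDigits a b) (n : ℕ) :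
    ∑ k ∈ range n, cantorTerm (b - 1) b k ≤ 1 := by
  simp_rw [cantorTerm_sub_one_eq ha]
  rw [sum_range_sub' (fun k => 1 / ∏ i ∈ Icc 1 k, (b i : ℝ))]
  simpa using (ha.prod_pos n).le

theorem summable_cantorTerm_sub_one (ha : IsCantorDigits a b) :
    Summable (cantorTerm (b - 1) b) :=
  summable_of_sum_range_le (fun n => (cantorTerm_nonneg ha n).trans (cantorTerm_le ha n))
    (sum_range_cantorTerm_sub_one_le ha)

theorem summable_cantorTerm (ha : IsCantorDigits a b) :
    Summable (cantorTerm a b) :=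
  (summable_cantorTerm_sub_one ha).of_nonneg_of_le (cantorTerm_nonneg ha) (cantorTerm_le ha)

theorem cantorSeries_pos (ha : IsCantorDigits a b)
    (h : ∃ n, 0 < a (n + 1)) : 0 < cantorSeries a b := by
  obtain ⟨n, hn⟩ := h
  refine (summable_cantorTerm ha).tsum_pos (cantorTerm_nonneg ha) n ?_
  exact div_pos (by exact_mod_cast hn) (ha.prod_pos _)

theorem cantorSeries_lt_one (ha : IsCantorDigits a b)
    (h : ∃ n, a (n + 1) < b (n + 1) - 1) : cantorSeries a b < 1 := by
  obtain ⟨n, hn⟩ := h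
  calc cantorSeries a b < ∑' k, cantorTerm (b - 1) b k :=
        (summable_cantorTerm_sub_one ha).tsum_lt_tsum_of_nonneg (cantorTerm_nonneg ha)
          (cantorTerm_le ha) (cantorTerm_lt ha hn)
    _ ≤ 1 := (summable_cantorTerm_sub_one ha).tsum_le_of_sum_range_le
        (sum_range_cantorTerm_sub_one_le ha)

theorem mul_cantorSeries_eq_add (ha : IsCantorDigits a b) :
    b 1 * cantorSeries a b = a 1 + cantorSeries (fun n => a (n + 1)) (fun n => b (n + 1)) := by
  have hb : (b 1 : ℝ) ≠ 0 := (one_pos.trans_le (ha.one_le le_rfl)).ne'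
  have hterm n : cantorTerm a b (n + 1) =
      cantorTerm (fun n => a (n + 1)) (fun n => b (n + 1)) n / b 1 := by
    rw [cantorTerm, cantorTerm, prod_Icc_one_succ, div_mul_eq_div_div_swap]
  rw [cantorSeries, (summable_cantorTerm ha).tsum_eq_zero_add, cantorSeries]
  simp_rw [hterm]
  rw [tsum_div_const, cantorTerm, zero_add, Icc_self, prod_singleton]
  field_simp

theorem exists_int_prod_mul_cantorSeries_eq (ha : IsCantorDigits a b) (N : ℕ) :
    ∃ z : ℤ, (∏ i ∈ Icc 1 N, (b i : ℝ)) * cantorSeries a b =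
      z + cantorSeries (fun n => a (n + N)) (fun n => b (n + N)) := by
  induction N with
  | zero => exact ⟨0, by simp⟩
  | succ N ih =>
    obtain ⟨z, hz⟩ := ih
    have h : (b (N + 1) : ℝ) * cantorSeries (fun n => a (n + N)) (fun n => b (n + N)) =
        a (N + 1) + cantorSeries (fun n => a (n + (N + 1))) (fun n => b (n + (N + 1))) := by
      convert mul_cantorSeries_eq_add (ha.shift N) using 4 <;> first | omega | (congr 1; omega)
    refine ⟨z * b (N + 1) + a (N + 1), ?_⟩
    rw [prod_Icc_succ_top (by omega), mul_right_comm, hz]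
    push_cast
    linear_combination h

theorem cantor_series_irrational_general (a b : ℕ → ℤ)
    (ha : ∀ n, 1 ≤ n → 0 ≤ a n ∧ a n ≤ b n - 1)
    (hprime : ∀ p : ℕ, p.Prime → {n : ℕ | 1 ≤ n ∧ (p : ℤ) ∣ b n}.Infinite)
    (hpos : {n : ℕ | 1 ≤ n ∧ 0 < a n}.Infinite)
    (hlt : {n : ℕ | 1 ≤ n ∧ a n < b n - 1}.Infinite) :
    Irrational ((a 0 : ℝ) +
      ∑' n : ℕ, (a (n + 1) : ℝ) / ∏ i ∈ Finset.Icc 1 (n + 1), (b i : ℝ)) := by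
  change Irrational ((a 0 : ℝ) + cantorSeries a b)
  have hdigits : IsCantorDigits a b := ha
  refine irrational_of_forall_exists_dvd fun m hm => ?_
  obtain ⟨N, -, hN⟩ :=
    exists_dvd_prod_Ioc (fun p hp => (hprime p hp).mono fun _ hn => hn.2) hm.ne' 0
  rw [← Icc_add_one_left_eq_Ioc, zero_add] at hN
  obtain ⟨z, hz⟩ := exists_int_prod_mul_cantorSeries_eq hdigits N
  have htail_pos := cantorSeries_pos (hdigits.shift N)
    ((hpos.exists_add_one_add N).imp fun _ => And.right)
  have htail_lt := cantorSeries_lt_one (hdigits.shift N)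
    ((hlt.exists_add_one_add N).imp fun _ => And.right)
  refine ⟨∏ i ∈ Icc 1 N, b i, hN, (∏ i ∈ Icc 1 N, b i) * a 0 + z, ?_, ?_⟩ <;>
  · push_cast
    linarith

theorem cantor_series_irrational (a b : ℕ → ℤ)
    (hb : ∀ n, 1 ≤ n → 2 ≤ b n)
    (ha : ∀ n, 1 ≤ n → 0 ≤ a n ∧ a n ≤ b n - 1)
    (hprime : ∀ p : ℕ, p.Prime → {n : ℕ | 1 ≤ n ∧ (p : ℤ) ∣ b n}.Infinite)
    (hpos : {n : ℕ | 1 ≤ n ∧ 0 < a n}.Infinite)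
    (hlt : {n : ℕ | 1 ≤ n ∧ a n < b n - 1}.Infinite) :
    Irrational ((a 0 : ℝ) +
      ∑' n : ℕ, (a (n + 1) : ℝ) / ∏ i ∈ Finset.Icc 1 (n + 1), (b i : ℝ)) :=
  cantor_series_irrational_general a b ha hprime hpos hlt
end

section
/- If n ≥ 3 and the n-th partial sum s_n = ∑_{k=0}^{n} 1/k! has denominator n! in lowest terms, then s_n is not a convergent of the simple continued fraction expansion of e. -/
/-!
If `s_n = p/q` were a convergent of `e`, then `q` would be a multiple of the reduced denominator
`n!`, and the convergent bound `|e - p/q| ≤ 1/q²` would give `e - s_n ≤ 1/(n!)² ≤ 1/(n+1)!` for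
`n ≥ 3`. But `e - s_n` exceeds `1/(n+1)!`, the next term of the series.
-/

namespace GenContFract

open GenContFract (of)

variable {K : Type*} [Field K] [LinearOrder K] [FloorRing K]

theorem exists_int_pair_eq_contsAux (v : K) (n : ℕ) :
    ∃ p : Pair ℤ, (of v).contsAux n = p.map (↑) := by
  induction n using Nat.strong_induction_on with
  | _ n IH =>
    match n with
    | 0 => exact ⟨⟨1, 0⟩, by simp [contsAux, Pair.map]⟩
    | 1 => exact ⟨⟨⌊v⌋, 1⟩, by simp [contsAux, Pair.map, of_h_eq_floor]⟩
    | n + 2 =>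
      obtain ⟨p, hp⟩ := IH (n + 1) (by omega)
      obtain ⟨pp, hpp⟩ := IH n (by omega)
      rcases hs : (of v).s.get? n with _ | gp
      · exact ⟨p, (contsAux_stable_of_terminated (by omega) hs).trans hp⟩
      · obtain ⟨ha, z, hb⟩ := of_partNum_eq_one_and_exists_int_partDen_eq hs
        refine ⟨⟨z * p.a + pp.a, z * p.b + pp.b⟩, ?_⟩
        simp [contsAux_recurrence hs hpp hp, Pair.map, ha, hb]

theorem exists_int_eq_nums_and_dens (v : K) (n : ℕ) :
    ∃ a b : ℤ, (of v).nums n = a ∧ (of v).dens n = b := by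
  obtain ⟨p, hp⟩ := exists_int_pair_eq_contsAux v (n + 1)
  refine ⟨p.a, p.b, ?_, ?_⟩
  · rw [num_eq_conts_a, nth_cont_eq_succ_nth_contAux, hp, Pair.map]
  · rw [den_eq_conts_b, nth_cont_eq_succ_nth_contAux, hp, Pair.map]

variable [IsStrictOrderedRing K] {v : K} {n : ℕ}

theorem one_le_dens_of_not_terminatedAt (h : ¬(of v).TerminatedAt n) : 1 ≤ (of v).dens n := by
  have hfib : (Nat.fib (n + 1) : K) ≤ (of v).dens n :=
    succ_nth_fib_le_of_nth_den (Or.inr (mt (terminated_stable n.pred_le) h))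
  exact le_trans (by exact_mod_cast Nat.fib_pos.mpr n.succ_pos) hfib

theorem den_le_dens_of_convs_eq {q : ℚ} (h : ¬(of v).TerminatedAt n)
    (hq : (of v).convs n = q) : (q.den : K) ≤ (of v).dens n := by
  obtain ⟨a, b, ha, hb⟩ := exists_int_eq_nums_and_dens v n
  have hb_pos : 0 < b := by
    have := one_le_dens_of_not_terminatedAt h
    rw [hb] at this
    exact_mod_cast this
  have hq_eq : q = a / b := by
    rw [conv_eq_num_div_den, ha, hb] at hq
    exact_mod_cast hq.symm
  have hdvd : (q.den : ℤ) ∣ b := by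
    rw [hq_eq, ← Rat.divInt_eq_div]
    exact Rat.den_dvd a b
  rw [hb]
  exact_mod_cast Int.le_of_dvd hb_pos hdvd

theorem abs_sub_le_of_convs_eq {q : ℚ} (hq : (of v).convs n = q) :
    |v - q| ≤ 1 / (q.den : K) ^ 2 := by
  by_cases h : (of v).TerminatedAt n
  · rw [← hq, ← of_correctness_of_terminatedAt h, sub_self, abs_zero]
    positivity
  have hden := den_le_dens_of_convs_eq h hq
  have hq_pos : (0 : K) < q.den := by exact_mod_cast q.den_pos
  calc |v - q| ≤ 1 / ((of v).dens n * (of v).dens (n + 1)) := hq ▸ abs_sub_convs_le h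
    _ ≤ 1 / (q.den : K) ^ 2 := by
      rw [sq]
      exact one_div_le_one_div_of_le (by positivity)
        (mul_le_mul hden (hden.trans of_den_mono) hq_pos.le zero_le_of_den)

end GenContFract

theorem Real.one_div_factorial_lt_exp_one_sub_sum (n : ℕ) :
    1 / ((n + 1).factorial : ℝ) < exp 1 - ∑ k ∈ Finset.range (n + 1), 1 / (k.factorial : ℝ) := by
  have h := Real.sum_le_exp_of_nonneg zero_le_one (n + 3)
  simp only [one_pow, Finset.sum_range_succ] at h ⊢
  have : (0 : ℝ) < 1 / ((n + 2).factorial : ℝ) := by positivity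
  linarith

theorem Nat.factorial_succ_le_factorial_sq {n : ℕ} (hn : 3 ≤ n) :
    (n + 1).factorial ≤ n.factorial ^ 2 := by
  rw [Nat.factorial_succ, sq]
  exact Nat.mul_le_mul_right _ (Nat.lt_factorial_self hn)

theorem partial_sum_not_convergent (n : ℕ) (hn : 3 ≤ n)
    (hden : (∑ k ∈ Finset.range (n + 1), (1 : ℚ) / (k.factorial : ℚ)).den = n.factorial) :
    ∀ m : ℕ, (GenContFract.of (Real.exp 1)).convs m ≠
      ((∑ k ∈ Finset.range (n + 1), (1 : ℚ) / (k.factorial : ℚ)) : ℝ) := by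
  intro m hm
  set s : ℚ := ∑ k ∈ Finset.range (n + 1), (1 : ℚ) / (k.factorial : ℚ) with hs
  have hs_real : (s : ℝ) = ∑ k ∈ Finset.range (n + 1), 1 / (k.factorial : ℝ) := by
    simp [hs]
  have hconv : (GenContFract.of (Real.exp 1)).convs m = s := by
    simp [hm, hs]
  have hclose := GenContFract.abs_sub_le_of_convs_eq hconv
  rw [hden, hs_real] at hclose
  have hfact : ((n + 1).factorial : ℝ) ≤ (n.factorial : ℝ) ^ 2 := by
    exact_mod_cast Nat.factorial_succ_le_factorial_sq hn
  refine lt_irrefl (1 / ((n + 1).factorial : ℝ)) ?_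
  calc 1 / ((n + 1).factorial : ℝ)
      < Real.exp 1 - ∑ k ∈ Finset.range (n + 1), 1 / (k.factorial : ℝ) :=
        Real.one_div_factorial_lt_exp_one_sub_sum n
    _ ≤ |Real.exp 1 - ∑ k ∈ Finset.range (n + 1), 1 / (k.factorial : ℝ)| := le_abs_self _
    _ ≤ 1 / (n.factorial : ℝ) ^ 2 := hclose
    _ ≤ 1 / ((n + 1).factorial : ℝ) := by gcongr
end
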